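/- Let n, m be positive integers, let ρ > 0, let a ∈ ℝⁿ with a ≠ 0, let b ∈ ℝᵐ with b ≠ 0, and let R be an invertible n×n real matrix. Define Δ* := (ρ / (‖b‖ · ‖R⁻¹a‖)) · b (R⁻¹a)ᵀ R⁻¹ ∈ ℝ^{m×n}. Then ‖Δ* R‖_F = ρ and ‖Δ* a + b‖ = ‖b‖ + ρ‖R⁻¹a‖. -/
import Mathlib


open Matrix
open scoped BigOperators

/-- Euclidean norm of a real vector. -/
noncomputable def euclNorm {k : ℕ} (v : Fin k → ℝ) : ℝ :=
  Real.sqrt (∑ i, (v i) ^ 2)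

/-- Frobenius norm of a real matrix. -/
noncomputable def frobNorm {m n : ℕ} (A : Matrix (Fin m) (Fin n) ℝ) : ℝ :=
  Real.sqrt (∑ i, ∑ j, (A i j) ^ 2)

lemma euclNorm_nonneg {k : ℕ} (v : Fin k → ℝ) : 0 ≤ euclNorm v :=
  Real.sqrt_nonneg _

lemma euclNorm_pos {k : ℕ} (v : Fin k → ℝ) (hv : v ≠ 0) : 0 < euclNorm v := by
  apply Real.sqrt_pos.2
  rcases Function.ne_iff.1 hv with ⟨i, hi⟩
  simp only [Pi.zero_apply] at hi
  exact lt_of_lt_of_le (pow_two_pos_of_ne_zero hi)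
    (Finset.single_le_sum (f := fun j => (v j) ^ 2) (fun j _ => sq_nonneg _)
      (Finset.mem_univ i))

lemma euclNorm_smul {k : ℕ} (c : ℝ) (v : Fin k → ℝ) :
    euclNorm (c • v) = |c| * euclNorm v := by
  unfold euclNorm
  rw [show (∑ i, ((c • v) i) ^ 2) = c ^ 2 * ∑ i, (v i) ^ 2 by
    rw [Finset.mul_sum]; exact Finset.sum_congr rfl fun i _ => by simp [mul_pow],
    Real.sqrt_mul (by positivity), Real.sqrt_sq_eq_abs]

lemma euclNorm_sq {k : ℕ} (v : Fin k → ℝ) : euclNorm v ^ 2 = ∑ i, (v i) ^ 2 :=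
  Real.sq_sqrt (by positivity)

/-- Attainment part of Lemma 2: the rank-one matrix
Δ* = (ρ/(‖b‖‖R⁻¹a‖)) b (R⁻¹a)ᵀ R⁻¹ lies on the boundary of the uncertainty set
and achieves ‖Δ*a + b‖ = ‖b‖ + ρ‖R⁻¹a‖. -/
theorem robust_inner_problem_attained
    (n m : ℕ) (hn : 0 < n) (hm : 0 < m)
    (ρ : ℝ) (hρ : 0 < ρ)
    (a : Fin n → ℝ) (ha : a ≠ 0) (b : Fin m → ℝ) (hb : b ≠ 0)
    (R : Matrix (Fin n) (Fin n) ℝ) (hR : IsUnit R.det)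
    (Δstar : Matrix (Fin m) (Fin n) ℝ)
    (hΔstar : Δstar =
      (ρ / (euclNorm b * euclNorm (R⁻¹ *ᵥ a))) •
        (vecMulVec b (R⁻¹ *ᵥ a) * R⁻¹)) :
    frobNorm (Δstar * R) = ρ ∧
      euclNorm (Δstar *ᵥ a + b) = euclNorm b + ρ * euclNorm (R⁻¹ *ᵥ a) := by
  set u : Fin n → ℝ := R⁻¹ *ᵥ a with hu_def
  have hu : u ≠ 0 := by
    intro h
    apply ha
    have : R *ᵥ u = a := by
      rw [hu_def, mulVec_mulVec, Matrix.mul_nonsing_inv R hR, one_mulVec]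
    rw [h, mulVec_zero] at this
    exact this.symm
  have hbn : 0 < euclNorm b := euclNorm_pos b hb
  have hun : 0 < euclNorm u := euclNorm_pos u hu
  set c : ℝ := ρ / (euclNorm b * euclNorm u) with hc_def
  have hc : 0 < c := div_pos hρ (mul_pos hbn hun)
  -- Frobenius norm of vecMulVec b u
  have hfrob_bu : frobNorm (vecMulVec b u) = euclNorm b * euclNorm u := by
    unfold frobNorm euclNorm
    rw [← Real.sqrt_mul (by positivity)]
    congr 1
    rw [Finset.sum_mul_sum]
    exact Finset.sum_congr rfl fun i _ => Finset.sum_congr rfl fun j _ => by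
      simp [vecMulVec_apply, mul_pow]
  constructor
  · have h1 : Δstar * R = c • vecMulVec b u := by
      rw [hΔstar, Matrix.smul_mul, Matrix.mul_assoc, Matrix.nonsing_inv_mul R hR,
        Matrix.mul_one]
    rw [h1]
    have : frobNorm (c • vecMulVec b u) = |c| * frobNorm (vecMulVec b u) := by
      unfold frobNorm
      rw [show (∑ i, ∑ j, ((c • vecMulVec b u) i j) ^ 2)
          = c ^ 2 * ∑ i, ∑ j, (vecMulVec b u i j) ^ 2 by
        rw [Finset.mul_sum]
        refine Finset.sum_congr rfl fun i _ => ?_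
        rw [Finset.mul_sum]
        exact Finset.sum_congr rfl fun j _ => by
          simp [Matrix.smul_apply, mul_pow],
        Real.sqrt_mul (by positivity), Real.sqrt_sq_eq_abs]
    rw [this, hfrob_bu, abs_of_pos hc, hc_def,
      div_mul_cancel₀ _ (by positivity : euclNorm b * euclNorm u ≠ 0)]
  · set S : ℝ := ∑ j, (u j) ^ 2 with hS_def
    have hS : S = euclNorm u ^ 2 := (euclNorm_sq u).symm
    have h2 : vecMulVec b u *ᵥ u = S • b := by
      funext i
      simp only [mulVec, dotProduct, vecMulVec_apply, Pi.smul_apply, smul_eq_mul]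
      rw [hS_def, Finset.sum_mul]
      exact Finset.sum_congr rfl fun j _ => by ring
    have hva : Δstar *ᵥ a = (c * S) • b := by
      rw [hΔstar, smul_mulVec, ← mulVec_mulVec, ← hu_def, h2, smul_smul]
    have : Δstar *ᵥ a + b = (c * S + 1) • b := by
      rw [hva, add_smul, one_smul]
    rw [this, euclNorm_smul]
    have hSpos : 0 < S := by rw [hS]; positivity
    rw [abs_of_pos (by positivity : (0:ℝ) < c * S + 1)]
    rw [hc_def, hS]
    field_simp
    ring
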